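/- arXiv:1703.07802 — 4 statements merged into one kernel-verified Lean document; each statement's English description precedes it below -/
import Mathlib

section
/- Let k be a positive integer, μ > 0, and λ with 0 < λ < kμ. Then the polynomial f(y) = ∑_{i=1}^{k} (1/μ^{i-1}) · ((i - λ/μ)/i!) · y^i - λ (equivalently, f(y) = ∑_{i=0}^{k} ((i μ - λ)/(i! μ^i)) y^i) has exactly one positive real root. -/
open Finset

theorem stmt3 (k : ℕ) (hk : 1 ≤ k) (μ : ℝ) (hμ : 0 < μ) (lam : ℝ)
    (hlam : 0 < lam) (hlamk : lam < k * μ) :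
    ∃! y : ℝ, 0 < y ∧
      ∑ i ∈ Finset.range (k + 1),
        (((i : ℝ) * μ - lam) / ((Nat.factorial i : ℝ) * μ ^ i)) * y ^ i = 0 := by
  set c : ℕ → ℝ := fun i => ((i : ℝ) * μ - lam) / ((Nat.factorial i : ℝ) * μ ^ i) with hc
  set f : ℝ → ℝ := fun y => ∑ i ∈ Finset.range (k + 1), c i * y ^ i with hf
  show ∃! y : ℝ, 0 < y ∧ f y = 0
  set m : ℕ := ⌈lam / μ⌉₊ with hm
  have hm1 : 1 ≤ m := Nat.ceil_pos.mpr (div_pos hlam hμ)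
  have hmk : m ≤ k := Nat.ceil_le.mpr (le_of_lt ((div_lt_iff₀ hμ).mpr hlamk))
  have hdenpos : ∀ i : ℕ, (0:ℝ) < (Nat.factorial i : ℝ) * μ ^ i := fun i =>
    mul_pos (by exact_mod_cast (Nat.factorial_pos i)) (pow_pos hμ i)
  have hneg : ∀ i : ℕ, i < m → c i < 0 := by
    intro i hi
    have h1 : (i : ℝ) < lam / μ := Nat.lt_ceil.mp hi
    have h2 : (i : ℝ) * μ < lam := (lt_div_iff₀ hμ).mp h1
    exact div_neg_of_neg_of_pos (by linarith) (hdenpos i)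
  have hnonneg : ∀ i : ℕ, m ≤ i → 0 ≤ c i := by
    intro i hi
    have h1 : lam / μ ≤ (i : ℝ) := Nat.ceil_le.mp hi
    have h2 : lam ≤ (i : ℝ) * μ := (div_le_iff₀ hμ).mp h1
    exact div_nonneg (by linarith) (hdenpos i).le
  have hck : 0 < c k := div_pos (by linarith) (hdenpos k)
  set g : ℝ → ℝ := fun y => ∑ i ∈ Finset.range (k + 1), c i * (y ^ i / y ^ m) with hg
  have hfg : ∀ y : ℝ, y ≠ 0 → f y = g y * y ^ m := by
    intro y hy
    rw [hf, hg, Finset.sum_mul]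
    refine Finset.sum_congr rfl fun i _ => ?_
    rw [mul_assoc, div_mul_cancel₀ _ (pow_ne_zero m hy)]
  have hratio_inv : ∀ (y : ℝ), y ≠ 0 → ∀ i : ℕ, i ≤ m → y ^ i / y ^ m = (y ^ (m - i))⁻¹ := by
    intro y hy i hi
    rw [show y ^ m = y ^ i * y ^ (m - i) by rw [← pow_add, Nat.add_sub_cancel' hi],
      ← div_div, div_self (pow_ne_zero _ hy), one_div]
  have hratio_pow : ∀ (y : ℝ), y ≠ 0 → ∀ i : ℕ, m ≤ i → y ^ i / y ^ m = y ^ (i - m) := by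
    intro y hy i hi
    rw [show y ^ i = y ^ (i - m) * y ^ m by rw [← pow_add, Nat.sub_add_cancel hi],
      mul_div_cancel_right₀ _ (pow_ne_zero _ hy)]
  -- strict monotonicity of g on positives
  have hmono : ∀ a b : ℝ, 0 < a → a < b → g a < g b := by
    intro a b ha hab
    have hb : 0 < b := ha.trans hab
    have key_lt : ∀ i : ℕ, i < m → b ^ i / b ^ m < a ^ i / a ^ m := by
      intro i hi
      rw [hratio_inv a ha.ne' i hi.le, hratio_inv b hb.ne' i hi.le]
      have hpow : a ^ (m - i) < b ^ (m - i) :=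
        pow_lt_pow_left₀ hab ha.le (Nat.sub_ne_zero_of_lt hi)
      exact inv_strictAnti₀ (pow_pos ha _) hpow
    have key_le : ∀ i : ℕ, m ≤ i → a ^ i / a ^ m ≤ b ^ i / b ^ m := by
      intro i hi
      rw [hratio_pow a ha.ne' i hi, hratio_pow b hb.ne' i hi]
      exact pow_le_pow_left₀ ha.le hab.le _
    rw [hg]
    refine Finset.sum_lt_sum (fun i _ => ?_) ⟨0, Finset.mem_range.mpr (Nat.succ_pos k), ?_⟩
    · rcases lt_or_ge i m with h | h
      · exact (mul_le_mul_of_nonpos_left (key_lt i h).le (hneg i h).le)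
      · exact mul_le_mul_of_nonneg_left (key_le i h) (hnonneg i h)
    · exact mul_lt_mul_of_neg_left (key_lt 0 hm1) (hneg 0 hm1)
  -- f 0
  have hf0 : f 0 = -lam := by
    simp only [hf]
    rw [Finset.sum_eq_single 0]
    · simp [hc]
    · intro i _ hi; simp [zero_pow hi]
    · intro h; exact absurd (Finset.mem_range.mpr (Nat.succ_pos k)) h
  -- f M > 0 for large M
  set B : ℝ := ∑ i ∈ Finset.range k, |c i| with hB
  have hBnonneg : 0 ≤ B := Finset.sum_nonneg fun i _ => abs_nonneg _
  set M : ℝ := max 1 ((B + 1) / c k) with hM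
  have hM1 : (1:ℝ) ≤ M := le_max_left _ _
  have hMpos : 0 < M := lt_of_lt_of_le one_pos hM1
  have hfM : 0 < f M := by
    have habs : |∑ i ∈ Finset.range k, c i * M ^ i| ≤ B * M ^ (k - 1) := by
      calc |∑ i ∈ Finset.range k, c i * M ^ i|
          ≤ ∑ i ∈ Finset.range k, |c i * M ^ i| := Finset.abs_sum_le_sum_abs _ _
        _ = ∑ i ∈ Finset.range k, |c i| * M ^ i := by
            refine Finset.sum_congr rfl fun i _ => ?_
            rw [abs_mul, abs_of_nonneg (pow_nonneg hMpos.le _)]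
        _ ≤ ∑ i ∈ Finset.range k, |c i| * M ^ (k - 1) :=
            Finset.sum_le_sum fun i hi =>
              mul_le_mul_of_nonneg_left
                (pow_le_pow_right₀ hM1 (by have := Finset.mem_range.mp hi; omega))
                (abs_nonneg _)
        _ = B * M ^ (k - 1) := (Finset.sum_mul _ _ _).symm
    have hlow : -(B * M ^ (k - 1)) ≤ ∑ i ∈ Finset.range k, c i * M ^ i :=
      (neg_le_neg habs).trans (neg_abs_le _)
    have hsplit : f M = (∑ i ∈ Finset.range k, c i * M ^ i) + c k * M ^ k := by
      simp only [hf]; rw [Finset.sum_range_succ]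
    have hMk : M ^ k = M ^ (k - 1) * M := by
      rw [← pow_succ, Nat.sub_add_cancel hk]
    have hckM : B + 1 ≤ c k * M := by
      have := le_max_right 1 ((B + 1) / c k)
      calc B + 1 = c k * ((B + 1) / c k) := by field_simp
        _ ≤ c k * M := mul_le_mul_of_nonneg_left this hck.le
    have hpow1 : (1:ℝ) ≤ M ^ (k - 1) := one_le_pow₀ hM1
    rw [hsplit, hMk]
    nlinarith [hpow1, hckM, hlow, hBnonneg]
  -- existence via IVT
  have hcont : Continuous f := by
    rw [hf]; exact continuous_finset_sum _ fun i _ => continuous_const.mul (continuous_pow i)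
  obtain ⟨y, hyIoo, hy0⟩ :=
    intermediate_value_Ioo hMpos.le hcont.continuousOn
      (Set.mem_Ioo.mpr ⟨by rw [hf0]; linarith, hfM⟩)
  have hypos : 0 < y := hyIoo.1
  have hroot_g : ∀ z : ℝ, 0 < z → f z = 0 → g z = 0 := by
    intro z hz hfz
    have := hfg z hz.ne'
    rw [hfz] at this
    exact (mul_eq_zero.mp this.symm).resolve_right (pow_ne_zero m hz.ne')
  refine ⟨y, ⟨hypos, hy0⟩, ?_⟩
  rintro z ⟨hz, hzf⟩
  by_contra hne
  have hgz : g z = 0 := hroot_g z hz hzf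
  have hgy : g y = 0 := hroot_g y hypos hy0
  rcases lt_or_gt_of_ne hne with h | h
  · have := hmono z y hz h; rw [hgz, hgy] at this; exact lt_irrefl 0 this
  · have := hmono y z hypos h; rw [hgz, hgy] at this; exact lt_irrefl 0 this
end

section
/- Let k ≥ 1 and define F(y, x) = ∑_{i=0}^{k} ((x - i)/i!) y^i for real y, x (so F(y,x) = (x/k! - 1/(k-1)!)y^k + ... + (x-1)y + x). Suppose (x, y) with y > 0 and 0 ≤ x < k satisfies F(y, x) = 0. Then the partial derivative ∂F/∂y evaluated at (y, x) is nonpositive, and ∂F/∂x = ∑_{i=0}^k y^i/i! > 0; consequently the implicit derivative dy/dx = -(∂F/∂x)/(∂F/∂y) is nonnegative (positive when ∂F/∂y < 0). -/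
open Finset

theorem stmt5 (k : ℕ) (hk : 1 ≤ k) (x y : ℝ) (hy : 0 < y) (hx0 : 0 ≤ x) (hxk : x < k)
    (hF : ∑ i ∈ Finset.range (k + 1), ((x - (i : ℝ)) / (Nat.factorial i : ℝ)) * y ^ i = 0)
    (DyF DxF : ℝ)
    (hDyF : DyF = ∑ i ∈ Finset.range (k + 1),
      (i : ℝ) * ((x - (i : ℝ)) / (Nat.factorial i : ℝ)) * y ^ (i - 1))
    (hDxF : DxF = ∑ i ∈ Finset.range (k + 1), y ^ i / (Nat.factorial i : ℝ)) :
    DyF ≤ 0 ∧ 0 < DxF ∧ 0 ≤ -(DxF / DyF) ∧ (DyF < 0 → 0 < -(DxF / DyF)) := by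
  set S2 : ℝ := ∑ i ∈ Finset.range (k + 1),
      (x - (i : ℝ)) ^ 2 / (Nat.factorial i : ℝ) * y ^ i with hS2
  have key : y * DyF + S2 = x * ∑ i ∈ Finset.range (k + 1),
      ((x - (i : ℝ)) / (Nat.factorial i : ℝ)) * y ^ i := by
    rw [hDyF, Finset.mul_sum, hS2, ← Finset.sum_add_distrib, Finset.mul_sum]
    refine Finset.sum_congr rfl fun i _ => ?_
    cases i with
    | zero => simp [sq]
    | succ n =>
      have h1 : (n + 1) - 1 = n := rfl
      rw [h1, pow_succ]
      ring
  rw [hF, mul_zero] at key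
  have hS2pos : 0 < S2 := by
    refine Finset.sum_pos' (fun i _ => ?_) ⟨k, Finset.self_mem_range_succ k, ?_⟩
    · exact mul_nonneg (div_nonneg (sq_nonneg _) (by positivity)) (le_of_lt (pow_pos hy i))
    · have : x - (k : ℝ) ≠ 0 := sub_ne_zero.mpr (ne_of_lt hxk)
      positivity
  have hyDyF : y * DyF < 0 := by linarith
  have hDy : DyF < 0 := by
    by_contra h
    push_neg at h
    nlinarith
  have hDx : 0 < DxF := by
    rw [hDxF]
    refine Finset.sum_pos (fun i _ => by positivity) ⟨0, by simp⟩
  have hq : DxF / DyF < 0 := div_neg_of_pos_of_neg hDx hDy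
  exact ⟨le_of_lt hDy, hDx, by linarith, fun _ => by linarith⟩
end

section
/- Let k ≥ 1 and define g(y) = y · B(k, y) where B(k, y) = (y^k/k!)/(∑_{j=0}^k y^j/j!) is the Erlang blocking probability (μ = 1). Then g is strictly increasing in y on (0, ∞). -/
open Finset

theorem stmt14 (k : ℕ) (hk : 1 ≤ k) :
    StrictMonoOn (fun y : ℝ => y * ((y ^ k / (Nat.factorial k : ℝ)) /
      (∑ j ∈ Finset.range (k + 1), y ^ j / (Nat.factorial j : ℝ)))) (Set.Ioi (0 : ℝ)) := by
  have Spos : ∀ y : ℝ, 0 < y → 0 < ∑ j ∈ Finset.range (k + 1), y ^ j / (Nat.factorial j : ℝ) := by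
    intro y hy
    apply Finset.sum_pos
    · intro j _; positivity
    · exact Finset.nonempty_range_add_one
  -- T y := ∑ j, 1/(j! * y^(k+1-j))
  have hTpos : ∀ y : ℝ, 0 < y →
      0 < ∑ j ∈ Finset.range (k + 1), 1 / ((Nat.factorial j : ℝ) * y ^ (k + 1 - j)) := by
    intro y hy
    apply Finset.sum_pos
    · intro j _; positivity
    · exact Finset.nonempty_range_add_one
  have hrepr : ∀ y : ℝ, 0 < y →
      y * ((y ^ k / (Nat.factorial k : ℝ)) /
        (∑ j ∈ Finset.range (k + 1), y ^ j / (Nat.factorial j : ℝ)))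
      = 1 / ((Nat.factorial k : ℝ) *
          ∑ j ∈ Finset.range (k + 1), 1 / ((Nat.factorial j : ℝ) * y ^ (k + 1 - j))) := by
    intro y hy
    have hS := Spos y hy
    have hy0 : y ≠ 0 := ne_of_gt hy
    have hTS : (∑ j ∈ Finset.range (k + 1), 1 / ((Nat.factorial j : ℝ) * y ^ (k + 1 - j)))
        = (∑ j ∈ Finset.range (k + 1), y ^ j / (Nat.factorial j : ℝ)) / y ^ (k + 1) := by
      rw [Finset.sum_div]
      apply Finset.sum_congr rfl
      intro j hj
      have hjk : j ≤ k := Nat.lt_succ_iff.mp (Finset.mem_range.mp hj)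
      have hpow : y ^ (k + 1) = y ^ j * y ^ (k + 1 - j) := by
        rw [← pow_add]
        congr 1
        omega
      have hfj : (Nat.factorial j : ℝ) ≠ 0 := Nat.cast_ne_zero.mpr (Nat.factorial_ne_zero j)
      field_simp
      rw [hpow]
      ring
    rw [hTS]
    have hfk : (Nat.factorial k : ℝ) ≠ 0 := Nat.cast_ne_zero.mpr (Nat.factorial_ne_zero k)
    field_simp
    ring
  intro a ha b hb hab
  simp only [Set.mem_Ioi] at ha hb
  simp only
  rw [hrepr a ha, hrepr b hb]
  have hTlt : (∑ j ∈ Finset.range (k + 1), 1 / ((Nat.factorial j : ℝ) * b ^ (k + 1 - j)))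
      < ∑ j ∈ Finset.range (k + 1), 1 / ((Nat.factorial j : ℝ) * a ^ (k + 1 - j)) := by
    apply Finset.sum_lt_sum_of_nonempty Finset.nonempty_range_add_one
    intro j hj
    have hjk : j ≤ k := Nat.lt_succ_iff.mp (Finset.mem_range.mp hj)
    have hm : 0 < k + 1 - j := by omega
    have hpow : a ^ (k + 1 - j) < b ^ (k + 1 - j) :=
      pow_lt_pow_left₀ hab (le_of_lt ha) (Nat.pos_iff_ne_zero.mp hm)
    have hfj : (0:ℝ) < (Nat.factorial j : ℝ) := Nat.cast_pos.mpr (Nat.factorial_pos j)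
    apply one_div_lt_one_div_of_lt
    · positivity
    · exact mul_lt_mul_of_pos_left hpow hfj
  have hfk : (0:ℝ) < (Nat.factorial k : ℝ) := Nat.cast_pos.mpr (Nat.factorial_pos k)
  apply one_div_lt_one_div_of_lt
  · exact mul_pos hfk (hTpos b hb)
  · exact mul_lt_mul_of_pos_left hTlt hfk
end

section
/- Let k ≥ 1, μ = 1, and for x ∈ (0, k) let y(x) be the unique positive root of F(y,x) = ∑_{i=0}^k ((x-i)/i!) y^i = 0. Then y is a convex function of x on (0, k): y''(x) ≥ 0 wherever the implicit function is twice differentiable. -/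
/-!
Write `Mⱼ(y) = ∑_{i ≤ k} iʲ yⁱ / i!`. The root condition says `x = M₁(y) / M₀(y)`, the mean of
the Poisson(`y`) distribution conditioned on `{0, …, k}`, so `y(x)` inverts this mean function
`m`. Since `m' = σ² / y > 0`, `y(x)` is convex as soon as `m` is concave. Using `y Mⱼ' = Mⱼ₊₁`
and the boundary relations `Mⱼ₊₁ = y (∑ (i+1)ʲ yⁱ / i! - (k+1)ʲ yᵏ / k!)`, one finds
`m'' = -(yᵏ / k!) Q / (y M₀³)` with `Q = M₀² ((k - μ)(k - μ + 1) - σ²)`. Expanding `4 Q` as a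
double sum, the coefficient of `yⁿ / n!` is `∑ C(n, i) (s² + 2s - 3 (n - 2i)²)` with
`s = 2k - n`, over the `i` with `|n - 2i| ≤ min(n, s)`. Both factors decrease in `|n - 2i|` and
the quadratic one has nonnegative mean, so Chebyshev's sum inequality gives `Q ≥ 0`.
-/

open Finset
open scoped Nat

theorem Nat.choose_le_choose_of_le_of_le_half {n a b : ℕ} (hab : a ≤ b) (hb : b ≤ n / 2) :
    n.choose a ≤ n.choose b := by
  induction b, hab using Nat.le_induction with
  | base => rfl
  | succ b _ ih => exact (ih (by omega)).trans (Nat.choose_le_succ_of_lt_half_left (by omega))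

theorem Nat.choose_le_choose_of_sq_le {n i j : ℕ} (hj : j ≤ n)
    (h : ((n : ℝ) - 2 * j) ^ 2 ≤ ((n : ℝ) - 2 * i) ^ 2) : n.choose i ≤ n.choose j := by
  rcases lt_or_ge n i with hi | hi
  · simp [Nat.choose_eq_zero_of_lt hi]
  have hsymm : ∀ {i}, i ≤ n → n.choose i = n.choose (min i (n - i)) := by
    intro i hi
    rcases le_total i (n - i) with h | h
    · rw [min_eq_left h]
    · rw [min_eq_right h, Nat.choose_symm hi]
  have habs : ∀ {i}, i ≤ n → |(n : ℝ) - 2 * i| = n - 2 * (min i (n - i) : ℕ) := by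
    intro i hi
    rcases le_total i (n - i) with h | h
    · rw [min_eq_left h, abs_of_nonneg (sub_nonneg.mpr (by norm_cast; omega))]
    · rw [min_eq_right h, abs_of_nonpos (sub_nonpos.mpr (by norm_cast; omega))]
      push_cast [hi]
      ring
  rw [sq_le_sq, habs hi, habs hj] at h
  have hmin : ((min i (n - i) : ℕ) : ℝ) ≤ (min j (n - j) : ℕ) := by linarith
  rw [hsymm hi, hsymm hj]
  exact Nat.choose_le_choose_of_le_of_le_half (by exact_mod_cast hmin) (by omega)

theorem sum_range_sub_two_mul_sq (N : ℕ) (c : ℝ) :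
    ∑ j ∈ range N, (c - 2 * j) ^ 2
      = N * c ^ 2 - 2 * c * N * (N - 1) + 2 * (N - 1) * N * (2 * N - 1) / 3 := by
  induction N with
  | zero => simp
  | succ N ih => rw [sum_range_succ, ih]; push_cast; ring

theorem sum_centered_quadratic_mul_nonneg {m : ℕ} {v : ℕ → ℝ}
    (hv : MonovaryOn v (fun j => (m : ℝ) ^ 2 + 2 * m - 3 * (m - 2 * j) ^ 2) (range (m + 1))) :
    0 ≤ ∑ j ∈ range (m + 1), v j * ((m : ℝ) ^ 2 + 2 * m - 3 * (m - 2 * j) ^ 2) := by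
  have hzero : ∑ j ∈ range (m + 1), ((m : ℝ) ^ 2 + 2 * m - 3 * (m - 2 * j) ^ 2) = 0 := by
    rw [sum_sub_distrib, ← mul_sum, sum_range_sub_two_mul_sq, sum_const, card_range]
    push_cast
    ring
  have hcheb := hv.sum_mul_sum_le_card_mul_sum
  rw [hzero, mul_zero] at hcheb
  exact nonneg_of_mul_nonneg_right hcheb (by positivity)

theorem sum_range_sum_range_eq_sum_sum_Icc {M : Type*} [AddCommMonoid M] (k : ℕ)
    (F : ℕ → ℕ → M) :
    ∑ i ∈ range (k + 1), ∑ j ∈ range (k + 1), F i j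
      = ∑ n ∈ range (2 * k + 1), ∑ i ∈ Icc (n - k) (min n k), F i (n - i) := by
  have shift : ∀ i, ∑ j ∈ range (k + 1), F i j = ∑ n ∈ Ico i (i + k + 1), F i (n - i) := by
    intro i
    rw [sum_Ico_eq_sum_range]
    simp [add_assoc]
  simp_rw [shift]
  exact sum_comm' (by intro i n; simp only [mem_range, mem_Ico, mem_Icc]; omega)

theorem sum_Icc_choose_mul_nonneg {k n : ℕ} (hn : n ≤ 2 * k) :
    0 ≤ ∑ i ∈ Icc (n - k) (min n k), (n.choose i : ℝ) *
      ((2 * k - n : ℝ) ^ 2 + 2 * (2 * k - n) - 3 * (n - 2 * i) ^ 2) := by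
  set l := n - k
  set m := min n k - l
  have hm : (m : ℝ) ≤ 2 * k - n := by
    rw [le_sub_iff_add_le]
    exact_mod_cast (show m + n ≤ 2 * k by omega)
  have hcenter : ∀ j : ℕ, (n : ℝ) - 2 * (l + j : ℕ) = m - 2 * j := by
    intro j
    rw [show n = 2 * l + m by omega]
    push_cast
    ring
  rw [← Ico_add_one_right_eq_Icc, sum_Ico_eq_sum_range, show min n k + 1 - l = m + 1 by omega]
  refine (sum_centered_quadratic_mul_nonneg (v := fun j => (n.choose (l + j) : ℝ)) ?_).trans
    (sum_le_sum fun j _ => ?_)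
  · intro i _ j hj hij
    have hsq : ((m : ℝ) - 2 * j) ^ 2 < (m - 2 * i) ^ 2 := by linarith
    rw [← hcenter, ← hcenter] at hsq
    dsimp only
    exact_mod_cast Nat.choose_le_choose_of_sq_le (by simp at hj; omega) hsq.le
  · rw [hcenter]
    gcongr

noncomputable def truncMoment (k j : ℕ) (y : ℝ) : ℝ :=
  ∑ i ∈ range (k + 1), (i : ℝ) ^ j * (y ^ i / i !)

/-- `M₀² ((k - μ)(k - μ + 1) - σ²)`, where `μ` and `σ²` are the mean and variance of the
Poisson(`y`) distribution conditioned on `{0, …, k}`, whose weights are `yⁱ / i!`. -/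
noncomputable def varianceSlack (k : ℕ) (y : ℝ) : ℝ :=
  (k ^ 2 + k) * truncMoment k 0 y ^ 2 - (2 * k + 1) * (truncMoment k 0 y * truncMoment k 1 y)
    + 2 * truncMoment k 1 y ^ 2 - truncMoment k 0 y * truncMoment k 2 y

theorem four_mul_varianceSlack (k : ℕ) (y : ℝ) :
    4 * varianceSlack k y = ∑ i ∈ range (k + 1), ∑ j ∈ range (k + 1),
      ((2 * k - i - j : ℝ) ^ 2 + 2 * (2 * k - i - j) - 3 * (i - j) ^ 2)
        * (y ^ i / i ! * (y ^ j / j !)) := by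
  let H : ℕ → ℕ → ℝ := fun i j => 4 * k ^ 2 + 4 * k - (8 * k + 4) * j + 8 * i * j - 4 * j ^ 2
  have hH : 4 * varianceSlack k y = ∑ i ∈ range (k + 1), ∑ j ∈ range (k + 1),
      H i j * (y ^ i / i ! * (y ^ j / j !)) := by
    simp only [varianceSlack, truncMoment, sq, sum_mul_sum]
    simp only [mul_sum, ← sum_add_distrib, ← sum_sub_distrib]
    exact sum_congr rfl fun i _ => sum_congr rfl fun j _ => by ring
  have hswap : ∑ i ∈ range (k + 1), ∑ j ∈ range (k + 1), H i j * (y ^ i / i ! * (y ^ j / j !))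
      = ∑ i ∈ range (k + 1), ∑ j ∈ range (k + 1), H j i * (y ^ i / i ! * (y ^ j / j !)) := by
    rw [sum_comm]
    exact sum_congr rfl fun i _ => sum_congr rfl fun j _ => by ring
  rw [show 4 * varianceSlack k y = (∑ i ∈ range (k + 1), ∑ j ∈ range (k + 1),
      (H i j + H j i) * (y ^ i / i ! * (y ^ j / j !)) / 2) by
    simp only [add_mul, add_div, sum_add_distrib, ← sum_div, ← hswap, ← hH]; ring]
  exact sum_congr rfl fun i _ => sum_congr rfl fun j _ => by ring

theorem varianceSlack_nonneg (k : ℕ) {y : ℝ} (hy : 0 ≤ y) : 0 ≤ varianceSlack k y := by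
  suffices 0 ≤ 4 * varianceSlack k y by linarith
  rw [four_mul_varianceSlack, sum_range_sum_range_eq_sum_sum_Icc]
  refine sum_nonneg fun n hn => ?_
  have hfiber : ∀ i ∈ Icc (n - k) (min n k),
      ((2 * k - i - (n - i : ℕ) : ℝ) ^ 2 + 2 * (2 * k - i - (n - i : ℕ))
          - 3 * (i - (n - i : ℕ)) ^ 2) * (y ^ i / i ! * (y ^ (n - i) / (n - i)!))
        = y ^ n / n ! * ((n.choose i : ℝ)
          * ((2 * k - n : ℝ) ^ 2 + 2 * (2 * k - n) - 3 * (n - 2 * i) ^ 2)) := by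
    intro i hi
    have hin : i ≤ n := by simp at hi; omega
    rw [Nat.cast_choose ℝ hin, Nat.cast_sub hin, div_mul_div_comm, ← pow_add,
      Nat.add_sub_cancel' hin]
    field_simp
    ring
  rw [sum_congr rfl hfiber, ← mul_sum]
  exact mul_nonneg (by positivity) (sum_Icc_choose_mul_nonneg (by simp at hn; omega))

theorem truncMoment_zero_pos (k : ℕ) {y : ℝ} (hy : 0 ≤ y) : 0 < truncMoment k 0 y :=
  lt_of_lt_of_le (by simp) (single_le_sum (f := fun i : ℕ => (i : ℝ) ^ 0 * (y ^ i / i !))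
    (fun i _ => by positivity) (mem_range.2 k.succ_pos))

theorem truncMoment_pos {k : ℕ} (hk : 1 ≤ k) (j : ℕ) {y : ℝ} (hy : 0 < y) :
    0 < truncMoment k j y :=
  lt_of_lt_of_le (by simpa using hy) (single_le_sum (f := fun i : ℕ => (i : ℝ) ^ j * (y ^ i / i !))
    (fun i _ => by positivity) (mem_range.2 (by omega : 1 < k + 1)))

theorem truncMoment_succ (k j : ℕ) (y : ℝ) :
    truncMoment k (j + 1) y = y * (∑ i ∈ range (k + 1), ((i : ℝ) + 1) ^ j * (y ^ i / i !)
      - ((k : ℝ) + 1) ^ j * (y ^ k / k !)) := by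
  rw [truncMoment, sum_range_succ', sum_range_succ, add_sub_cancel_right, mul_sum]
  simp only [Nat.cast_zero, zero_pow j.succ_ne_zero, zero_mul, add_zero]
  refine sum_congr rfl fun i _ => ?_
  rw [Nat.factorial_succ]
  push_cast
  field_simp
  ring

theorem truncMoment_one (k : ℕ) (y : ℝ) :
    truncMoment k 1 y = y * (truncMoment k 0 y - y ^ k / k !) := by
  rw [truncMoment_succ]
  simp [truncMoment]

theorem truncMoment_two (k : ℕ) (y : ℝ) :
    truncMoment k 2 y
      = y * (truncMoment k 1 y + truncMoment k 0 y - (k + 1) * (y ^ k / k !)) := by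
  rw [truncMoment_succ]
  simp only [truncMoment, ← sum_add_distrib]
  congr 2
  · exact sum_congr rfl fun i _ => by ring
  · ring

theorem truncMoment_three (k : ℕ) (y : ℝ) :
    truncMoment k 3 y = y * (truncMoment k 2 y + 2 * truncMoment k 1 y + truncMoment k 0 y
      - (k + 1) ^ 2 * (y ^ k / k !)) := by
  rw [truncMoment_succ]
  simp only [truncMoment, mul_sum, ← sum_add_distrib]
  congr 2
  exact sum_congr rfl fun i _ => by ring

theorem hasDerivAt_truncMoment (k j : ℕ) {y : ℝ} (hy : y ≠ 0) :
    HasDerivAt (truncMoment k j) (truncMoment k (j + 1) y / y) y := by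
  refine (HasDerivAt.fun_sum (u := range (k + 1)) fun i _ =>
    ((hasDerivAt_pow i y).div_const (i ! : ℝ)).const_mul ((i : ℝ) ^ j)).congr_deriv ?_
  rw [truncMoment, sum_div]
  refine sum_congr rfl fun i _ => ?_
  rcases i with _ | i
  · simp
  · rw [pow_succ]
    push_cast
    field_simp
    ring

theorem truncMoment_one_sq_lt {k : ℕ} (hk : 1 ≤ k) {y : ℝ} (hy : 0 < y) :
    truncMoment k 1 y ^ 2 < truncMoment k 2 y * truncMoment k 0 y := by
  set S := truncMoment k 0 y
  set T := truncMoment k 1 y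
  have hvar : ∑ i ∈ range (k + 1), ((i : ℝ) * S - T) ^ 2 * (y ^ i / i !)
      = S * (truncMoment k 2 y * S - T ^ 2) := by
    have hterm : ∀ i : ℕ, ((i : ℝ) * S - T) ^ 2 * (y ^ i / i !)
        = S ^ 2 * ((i : ℝ) ^ 2 * (y ^ i / i !)) - 2 * S * T * ((i : ℝ) ^ 1 * (y ^ i / i !))
          + T ^ 2 * ((i : ℝ) ^ 0 * (y ^ i / i !)) :=
      fun i => by ring
    simp only [hterm, sum_add_distrib, sum_sub_distrib, ← mul_sum]
    simp only [truncMoment, S, T]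
    ring
  have hpos : 0 < ∑ i ∈ range (k + 1), ((i : ℝ) * S - T) ^ 2 * (y ^ i / i !) :=
    lt_of_lt_of_le (by simpa using pow_pos (truncMoment_pos hk 1 hy) 2)
      (single_le_sum (f := fun i : ℕ => ((i : ℝ) * S - T) ^ 2 * (y ^ i / i !))
        (fun i _ => by positivity) (mem_range.2 k.succ_pos))
  rw [hvar] at hpos
  nlinarith [pos_of_mul_pos_right hpos (truncMoment_zero_pos k hy.le).le]

noncomputable def truncMean (k : ℕ) (y : ℝ) : ℝ :=
  truncMoment k 1 y / truncMoment k 0 y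

noncomputable def truncMeanDeriv (k : ℕ) (y : ℝ) : ℝ :=
  (truncMoment k 2 y * truncMoment k 0 y - truncMoment k 1 y ^ 2) / (y * truncMoment k 0 y ^ 2)

theorem hasDerivAt_truncMean (k : ℕ) {y : ℝ} (hy : 0 < y) :
    HasDerivAt (truncMean k) (truncMeanDeriv k y) y := by
  have hS := (truncMoment_zero_pos k hy.le).ne'
  refine ((hasDerivAt_truncMoment k 1 hy.ne').div (hasDerivAt_truncMoment k 0 hy.ne')
    hS).congr_deriv ?_
  rw [truncMeanDeriv]
  field_simp

theorem truncMeanDeriv_pos {k : ℕ} (hk : 1 ≤ k) {y : ℝ} (hy : 0 < y) : 0 < truncMeanDeriv k y := by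
  have := truncMoment_zero_pos k hy.le
  exact div_pos (sub_pos.2 (truncMoment_one_sq_lt hk hy)) (by positivity)

theorem hasDerivAt_truncMeanDeriv (k : ℕ) {y : ℝ} (hy : 0 < y) :
    HasDerivAt (truncMeanDeriv k)
      (-(y ^ k / k !) * varianceSlack k y / (y * truncMoment k 0 y ^ 3)) y := by
  have hS := (truncMoment_zero_pos k hy.le).ne'
  have h0 : HasDerivAt (truncMoment k 0) (truncMoment k 1 y / y) y :=
    hasDerivAt_truncMoment k 0 hy.ne'
  have h1 : HasDerivAt (truncMoment k 1) (truncMoment k 2 y / y) y :=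
    hasDerivAt_truncMoment k 1 hy.ne'
  have h2 : HasDerivAt (truncMoment k 2) (truncMoment k 3 y / y) y :=
    hasDerivAt_truncMoment k 2 hy.ne'
  refine (((h2.fun_mul h0).fun_sub (h1.fun_pow 2)).fun_div
    ((hasDerivAt_id' y).fun_mul (h0.fun_pow 2)) (by positivity)).congr_deriv ?_
  simp only [varianceSlack, Nat.cast_ofNat]
  rw [truncMoment_three, truncMoment_two, truncMoment_one]
  generalize y ^ k / k ! = R
  field_simp
  ring

theorem secondDeriv_nonneg_of_leftInvOn {U : Set ℝ} (hU : IsOpen U) {f f' f'' g g' g'' : ℝ → ℝ}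
    (hgf : Set.LeftInvOn g f U)
    (hf : ∀ x ∈ U, HasDerivAt f (f' x) x) (hf' : ∀ x ∈ U, HasDerivAt f' (f'' x) x)
    (hg : ∀ x ∈ U, HasDerivAt g (g' (f x)) (f x))
    {x : ℝ} (hx : x ∈ U) (hg' : HasDerivAt g' (g'' (f x)) (f x))
    (hg'_pos : 0 < g' (f x)) (hg''_nonpos : g'' (f x) ≤ 0) : 0 ≤ f'' x := by
  have hchain : ∀ z ∈ U, g' (f z) * f' z = 1 := fun z hz =>
    ((hg z hz).comp z (hf z hz)).unique <| (hasDerivAt_id z).congr_of_eventuallyEq <|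
      Filter.eventuallyEq_of_mem (hU.mem_nhds hz) hgf
  have hchain_deriv : g'' (f x) * f' x * f' x + g' (f x) * f'' x = 0 :=
    ((hg'.comp x (hf x hx)).mul (hf' x hx)).unique <|
      (hasDerivAt_const x 1).congr_of_eventuallyEq <|
        Filter.eventuallyEq_of_mem (hU.mem_nhds hx) hchain
  have hf'' : g' (f x) * f'' x = -g'' (f x) * f' x ^ 2 := by linear_combination hchain_deriv
  refine nonneg_of_mul_nonneg_right ?_ hg'_pos
  rw [hf'']
  exact mul_nonneg (neg_nonneg.2 hg''_nonpos) (sq_nonneg _)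

theorem stmt15 (k : ℕ) (hk : 1 ≤ k) (yfun y₁ y₂ : ℝ → ℝ)
    (hroot : ∀ x ∈ Set.Ioo (0 : ℝ) (k : ℝ), 0 < yfun x ∧
      ∑ i ∈ Finset.range (k + 1),
        ((x - (i : ℝ)) / (Nat.factorial i : ℝ)) * (yfun x) ^ i = 0)
    (hd1 : ∀ x ∈ Set.Ioo (0 : ℝ) (k : ℝ), HasDerivAt yfun (y₁ x) x)
    (hd2 : ∀ x ∈ Set.Ioo (0 : ℝ) (k : ℝ), HasDerivAt y₁ (y₂ x) x) :
    ∀ x ∈ Set.Ioo (0 : ℝ) (k : ℝ), 0 ≤ y₂ x := by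
  have hleftInv : Set.LeftInvOn (truncMean k) yfun (Set.Ioo 0 k) := by
    intro x hx
    obtain ⟨hy, hF⟩ := hroot x hx
    have hF' : ∑ i ∈ range (k + 1), ((x - (i : ℝ)) / (Nat.factorial i : ℝ)) * (yfun x) ^ i
        = x * truncMoment k 0 (yfun x) - truncMoment k 1 (yfun x) := by
      simp only [truncMoment, mul_sum, ← sum_sub_distrib]
      exact sum_congr rfl fun i _ => by ring
    rw [truncMean, div_eq_iff (truncMoment_zero_pos k hy.le).ne']
    linarith
  intro x hx
  have hy := (hroot x hx).1
  refine secondDeriv_nonneg_of_leftInvOn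
    (g'' := fun y => -(y ^ k / k !) * varianceSlack k y / (y * truncMoment k 0 y ^ 3))
    isOpen_Ioo hleftInv hd1 hd2 (fun z hz => hasDerivAt_truncMean k (hroot z hz).1) hx
    (hasDerivAt_truncMeanDeriv k hy) (truncMeanDeriv_pos hk hy) ?_
  have := truncMoment_zero_pos k hy.le
  rw [neg_mul, neg_div, neg_nonpos]
  exact div_nonneg (mul_nonneg (by positivity) (varianceSlack_nonneg k hy.le)) (by positivity)
end
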